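/- Let f : (0,∞) → ℝ be differentiable and let A be the general spherically symmetric flat SO(3)-connection determined by f. Then for every x ∈ ℝ³∖{0} and every i, the radial contraction satisfies Σ_μ x^μ A_μ{}^i(x) = f'(r) x^i, where r = |x|. Equivalently, in matrix form A_{μ i}{}^j := Σ_k A_μ{}^k ε_{ki}{}^j one has Σ_μ x^μ A_{μ i}{}^j(x) = f'(r) Σ_k x^k ε_{ki}{}^j. -/

import Mathlib

/-- The totally antisymmetric Levi-Civita symbol on three indices, `eps 0 1 2 = 1`. -/
noncomputable def eps (i j k : Fin 3) : ℝ :=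
  ((j : ℝ) - (i : ℝ)) * ((k : ℝ) - (i : ℝ)) * ((k : ℝ) - (j : ℝ)) / 2

/-- The radius `r = |x|` of a point `x ∈ ℝ³`. -/
noncomputable def rad (x : Fin 3 → ℝ) : ℝ := Real.sqrt (∑ i, x i ^ 2)

/-- The general spherically symmetric flat SO(3)-connection determined by `f`:
`A_μ{}^i = ε_{μij} x_j (cos f - 1)/r² + δ_μ^i sin f / r + x_μ x^i (r f' - sin f)/r³`. -/
noncomputable def Aconn (f : ℝ → ℝ) (x : Fin 3 → ℝ) (μ i : Fin 3) : ℝ :=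
  (∑ j, eps μ i j * x j) * (Real.cos (f (rad x)) - 1) / rad x ^ 2 +
  (if μ = i then (1 : ℝ) else 0) * Real.sin (f (rad x)) / rad x +
  x μ * x i * (rad x * deriv f (rad x) - Real.sin (f (rad x))) / rad x ^ 3

/-! Contracting with `x^μ` kills the `ε`-term by antisymmetry, turns `δ_μ^i` into `x^i` and
`x^μ x_μ` into `r²`, so the two `sin f` terms cancel and `f' x^i` is left. The matrix form
follows by associativity of the contraction. -/

open Finset Real

lemma eps_swap_first_last (i j k : Fin 3) : eps k j i = -eps i j k := by
  unfold eps; ring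

lemma sum_mul_sum_eps_mul_eq_zero (x : Fin 3 → ℝ) (i : Fin 3) :
    ∑ μ, x μ * ∑ j, eps μ i j * x j = 0 := by
  have hanti : ∑ μ, x μ * ∑ j, eps μ i j * x j = -∑ μ, x μ * ∑ j, eps μ i j * x j := by
    simp_rw [mul_sum, ← sum_neg_distrib]
    rw [sum_comm]
    refine sum_congr rfl fun μ _ => sum_congr rfl fun j _ => ?_
    rw [eps_swap_first_last]; ring
  linarith

lemma rad_sq (x : Fin 3 → ℝ) : rad x ^ 2 = ∑ i, x i ^ 2 :=
  sq_sqrt (sum_nonneg fun i _ => sq_nonneg (x i))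

lemma rad_pos {x : Fin 3 → ℝ} (hx : x ≠ 0) : 0 < rad x := by
  obtain ⟨i, hi⟩ := Function.ne_iff.mp hx
  exact sqrt_pos.mpr <|
    sum_pos' (fun j _ => sq_nonneg (x j)) ⟨i, mem_univ i, sq_pos_of_ne_zero hi⟩

theorem sum_mul_Aconn (f : ℝ → ℝ) {x : Fin 3 → ℝ} (hx : x ≠ 0) (i : Fin 3) :
    ∑ μ, x μ * Aconn f x μ i = deriv f (rad x) * x i := by
  have hr : rad x ≠ 0 := (rad_pos hx).ne'
  have hxx : ∑ μ, x μ * x μ = rad x ^ 2 := by rw [rad_sq]; simp only [sq]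
  have hδ : ∑ μ, x μ * (if μ = i then 1 else 0) = x i := by simp
  have hsplit : ∀ μ, x μ * Aconn f x μ i =
      (x μ * ∑ j, eps μ i j * x j) * ((cos (f (rad x)) - 1) / rad x ^ 2)
        + (x μ * if μ = i then 1 else 0) * (sin (f (rad x)) / rad x)
        + (x μ * x μ) * (x i * (rad x * deriv f (rad x) - sin (f (rad x))) / rad x ^ 3) := by
    intro μ; unfold Aconn; ring
  simp only [hsplit, sum_add_distrib, ← sum_mul, sum_mul_sum_eps_mul_eq_zero, hδ, hxx]
  field_simp
  ring

lemma sum_mul_sum_mul_eq_of_sum_mul_eq {ι κ R : Type*} [Fintype ι] [Fintype κ] [CommSemiring R]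
    {x : ι → R} {A : ι → κ → R} {c : R} {y : κ → R} (h : ∀ k, ∑ μ, x μ * A μ k = c * y k)
    (e : κ → R) : ∑ μ, x μ * ∑ k, A μ k * e k = c * ∑ k, y k * e k := by
  change dotProduct x (Matrix.mulVec (Matrix.of A) e) = c * dotProduct y e
  rw [Matrix.dotProduct_mulVec, ← smul_eq_mul, ← smul_dotProduct]
  congr 1
  ext k
  exact h k

theorem stmt8_general (f : ℝ → ℝ) :
    ∀ x : Fin 3 → ℝ, x ≠ 0 →
      (∀ i, ∑ μ, x μ * Aconn f x μ i = deriv f (rad x) * x i) ∧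
      (∀ i j, ∑ μ, x μ * (∑ k, Aconn f x μ k * eps k i j) =
        deriv f (rad x) * ∑ k, x k * eps k i j) := fun _ hx =>
  ⟨sum_mul_Aconn f hx, fun _ _ => sum_mul_sum_mul_eq_of_sum_mul_eq (sum_mul_Aconn f hx) _⟩

/-- the radial contraction of the spherically symmetric flat connection:
`x^μ A_μ{}^i = f'(r) x^i`, and in matrix form `x^μ A_{μi}{}^j = f'(r) x^k ε_{ki}{}^j`. -/
theorem stmt8 (f : ℝ → ℝ) (hf : ∀ r > 0, DifferentiableAt ℝ f r) :
    ∀ x : Fin 3 → ℝ, x ≠ 0 →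
      (∀ i, ∑ μ, x μ * Aconn f x μ i = deriv f (rad x) * x i) ∧
      (∀ i j, ∑ μ, x μ * (∑ k, Aconn f x μ k * eps k i j) =
        deriv f (rad x) * ∑ k, x k * eps k i j) :=
  stmt8_general f
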